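/- The symmetric part |A + Aᵀ|/2 (in Frobenius norm) is the first-order Taylor expansion of the function A ↦ dist(Id + A, SO(n)) at A = 0; that is, dist(Id + tA, SO(n)) = t·|(A + Aᵀ)/2| + o(t) as t → 0⁺ for every n×n real matrix A. -/

import Mathlib

/-!
Write `A = S + W` with `S` symmetric and `W` skew. Left multiplication by the rotation
`exp (-t W)` does not change the distance to `SO(n)`, and turns `1 + t A` into `exp (t S) + o(t)`;
the distance is `1`-Lipschitz. Finally `exp (t S) = Bᵀ B` with `B = exp (t S / 2)`, and for such a
matrix `tr (Bᵀ B Q) ≤ tr (Bᵀ B)` for every orthogonal `Q`, so the identity is a nearest rotation: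
`dist (exp (t S), SO(n)) = ‖exp (t S) - 1‖ = t ‖S‖ + o(t)`.
-/

open Matrix Filter Asymptotics Topology

noncomputable def frob {n : ℕ} (A : Matrix (Fin n) (Fin n) ℝ) : ℝ :=
  Real.sqrt (∑ i, ∑ j, (A i j) ^ 2)

def SOset (n : ℕ) : Set (Matrix (Fin n) (Fin n) ℝ) :=
  {Q | Qᵀ * Q = 1 ∧ Q.det = 1}

noncomputable def distSO {n : ℕ} (A : Matrix (Fin n) (Fin n) ℝ) : ℝ :=
  sInf ((fun Q => frob (A - Q)) '' SOset n)

open scoped Matrix.Norms.Frobenius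
open NormedSpace Metric

variable {n : ℕ}

namespace SOset

theorem one_mem : (1 : Matrix (Fin n) (Fin n) ℝ) ∈ SOset n := by
  simp [SOset]

theorem mul_mem {P Q : Matrix (Fin n) (Fin n) ℝ} (hP : P ∈ SOset n) (hQ : Q ∈ SOset n) :
    P * Q ∈ SOset n := by
  refine ⟨?_, by rw [det_mul, hP.2, hQ.2, mul_one]⟩
  rw [transpose_mul, Matrix.mul_assoc, ← Matrix.mul_assoc Pᵀ, hP.1, Matrix.one_mul, hQ.1]

theorem transpose_mem {Q : Matrix (Fin n) (Fin n) ℝ} (hQ : Q ∈ SOset n) : Qᵀ ∈ SOset n :=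
  ⟨by rw [transpose_transpose]; exact mul_eq_one_comm.mp hQ.1, by rw [det_transpose, hQ.2]⟩

/-- `det (exp X) = det (exp (X/2)) ^ 2` is nonnegative, and it is `±1` since `exp X` is
orthogonal. -/
theorem exp_mem_of_transpose_eq_neg {X : Matrix (Fin n) (Fin n) ℝ} (hX : Xᵀ = -X) :
    exp X ∈ SOset n := by
  have horth : (exp X)ᵀ * exp X = 1 := by
    rw [← Matrix.exp_transpose, hX, ← Matrix.exp_add_of_commute _ _ (Commute.refl X).neg_left,
      neg_add_cancel, exp_zero]
  have hhalf : exp X = exp ((1 / 2 : ℝ) • X) * exp ((1 / 2 : ℝ) • X) := by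
    rw [← Matrix.exp_add_of_commute _ _ (Commute.refl _), ← add_smul]; norm_num
  have hsq : (exp X).det * (exp X).det = 1 := by
    simpa [det_mul, det_transpose] using congrArg det horth
  refine ⟨horth, ?_⟩
  rcases mul_self_eq_one_iff.mp hsq with h | h
  · exact h
  · rw [hhalf, det_mul] at h; nlinarith [mul_self_nonneg (exp ((1 / 2 : ℝ) • X)).det]

end SOset

theorem frob_eq_norm (A : Matrix (Fin n) (Fin n) ℝ) : frob A = ‖A‖ := by
  rw [frobenius_norm_def, frob, Real.sqrt_eq_rpow]
  simp only [Real.norm_eq_abs, Real.rpow_two, sq_abs]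

theorem norm_sq_eq_trace (X : Matrix (Fin n) (Fin n) ℝ) : ‖X‖ ^ 2 = trace (Xᵀ * X) := by
  rw [← frob_eq_norm, frob, Real.sq_sqrt (by positivity), Finset.sum_comm]
  simp [trace, Matrix.mul_apply, sq]

theorem norm_sub_sq_eq_trace (X Y : Matrix (Fin n) (Fin n) ℝ) :
    ‖X - Y‖ ^ 2 = ‖X‖ ^ 2 - 2 * trace (Xᵀ * Y) + ‖Y‖ ^ 2 := by
  have hYX : trace (Yᵀ * X) = trace (Xᵀ * Y) := by
    rw [← trace_transpose, transpose_mul, transpose_transpose]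
  rw [norm_sq_eq_trace, norm_sq_eq_trace, norm_sq_eq_trace, transpose_sub, Matrix.sub_mul,
    Matrix.mul_sub, Matrix.mul_sub, trace_sub, trace_sub, trace_sub, hYX]
  ring

theorem norm_mul_of_transpose_mul_self {Q : Matrix (Fin n) (Fin n) ℝ} (hQ : Qᵀ * Q = 1)
    (X : Matrix (Fin n) (Fin n) ℝ) : ‖Q * X‖ = ‖X‖ := by
  have : ‖Q * X‖ ^ 2 = ‖X‖ ^ 2 := by
    rw [norm_sq_eq_trace, norm_sq_eq_trace, transpose_mul, Matrix.mul_assoc,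
      ← Matrix.mul_assoc Qᵀ, hQ, Matrix.one_mul]
  exact (pow_left_inj₀ (norm_nonneg _) (norm_nonneg _) two_ne_zero).mp this

theorem distSO_eq_infDist (M : Matrix (Fin n) (Fin n) ℝ) : distSO M = infDist M (SOset n) := by
  rw [distSO, infDist_eq_iInf, sInf_image']
  simp only [frob_eq_norm, dist_eq_norm]

theorem distSO_mul_of_mem {Q : Matrix (Fin n) (Fin n) ℝ} (hQ : Q ∈ SOset n)
    (M : Matrix (Fin n) (Fin n) ℝ) : distSO (Q * M) = distSO M := by
  have key : ∀ P ∈ SOset n, ∀ M, distSO (P * M) ≤ distSO M := fun P hP M => by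
    simp only [distSO_eq_infDist]
    refine (le_infDist ⟨1, SOset.one_mem⟩).2 fun R hR => ?_
    calc infDist (P * M) (SOset n) ≤ dist (P * M) (P * R) :=
          infDist_le_dist_of_mem (SOset.mul_mem hP hR)
      _ = dist M R := by rw [dist_eq_norm, dist_eq_norm, ← Matrix.mul_sub,
          norm_mul_of_transpose_mul_self hP.1]
  refine le_antisymm (key Q hQ M) ?_
  simpa [← Matrix.mul_assoc, hQ.1] using key Qᵀ (SOset.transpose_mem hQ) (Q * M)

theorem abs_distSO_sub_le (M N : Matrix (Fin n) (Fin n) ℝ) :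
    |distSO M - distSO N| ≤ ‖M - N‖ := by
  simpa [distSO_eq_infDist, Real.dist_eq, dist_eq_norm] using
    (lipschitz_infDist_pt (SOset n)).dist_le_mul M N

/-- With `X = Bᵀ` and `Y = Q Bᵀ` of equal norm, `tr (Bᵀ B Q) = tr (Xᵀ Y) ≤ ‖X‖²`. -/
theorem trace_transpose_mul_self_mul_le {Q : Matrix (Fin n) (Fin n) ℝ} (hQ : Qᵀ * Q = 1)
    (B : Matrix (Fin n) (Fin n) ℝ) : trace (Bᵀ * B * Q) ≤ trace (Bᵀ * B) := by
  have h := norm_sub_sq_eq_trace Bᵀ (Q * Bᵀ)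
  rw [norm_mul_of_transpose_mul_self hQ, transpose_transpose] at h
  have hX : ‖Bᵀ‖ ^ 2 = trace (Bᵀ * B) := by
    rw [norm_sq_eq_trace, transpose_transpose, trace_mul_comm]
  have hXY : trace (B * (Q * Bᵀ)) = trace (Bᵀ * B * Q) := by
    rw [trace_mul_comm, Matrix.mul_assoc, trace_mul_comm]
  nlinarith [sq_nonneg ‖Bᵀ - Q * Bᵀ‖]

theorem distSO_transpose_mul_self (B : Matrix (Fin n) (Fin n) ℝ) :
    distSO (Bᵀ * B) = ‖Bᵀ * B - 1‖ := by
  rw [distSO_eq_infDist]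
  refine le_antisymm (by simpa [dist_eq_norm] using infDist_le_dist_of_mem SOset.one_mem)
    ((le_infDist ⟨1, SOset.one_mem⟩).2 fun Q hQ => ?_)
  have hsymm : (Bᵀ * B)ᵀ = Bᵀ * B := by rw [transpose_mul, transpose_transpose]
  have hQnorm : ‖Q‖ = ‖(1 : Matrix (Fin n) (Fin n) ℝ)‖ := by
    simpa using norm_mul_of_transpose_mul_self hQ.1 1
  have hsq : ‖Bᵀ * B - 1‖ ^ 2 ≤ ‖Bᵀ * B - Q‖ ^ 2 := by
    rw [norm_sub_sq_eq_trace, norm_sub_sq_eq_trace, hsymm, hQnorm, Matrix.mul_one]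
    linarith [trace_transpose_mul_self_mul_le hQ.1 B]
  rw [dist_eq_norm]
  exact (sq_le_sq₀ (norm_nonneg _) (norm_nonneg _)).mp hsq

theorem abs_distSO_sub_norm_le {R : Matrix (Fin n) (Fin n) ℝ} (hR : R ∈ SOset n)
    (M B T : Matrix (Fin n) (Fin n) ℝ) :
    |distSO M - ‖T‖| ≤ ‖R * M - (1 + T)‖ + 2 * ‖Bᵀ * B - (1 + T)‖ := by
  have hMN := abs_distSO_sub_le (R * M) (Bᵀ * B)
  rw [distSO_mul_of_mem hR, distSO_transpose_mul_self] at hMN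
  have hN : |‖Bᵀ * B - 1‖ - ‖T‖| ≤ ‖Bᵀ * B - (1 + T)‖ := by
    simpa [sub_sub] using abs_norm_sub_norm_le (Bᵀ * B - 1) T
  have htri : ‖R * M - Bᵀ * B‖ ≤ ‖R * M - (1 + T)‖ + ‖Bᵀ * B - (1 + T)‖ := by
    simpa [norm_sub_rev (1 + T)] using norm_sub_le_norm_sub_add_norm_sub (R * M) (1 + T) (Bᵀ * B)
  linarith [abs_sub_le (distSO M) ‖Bᵀ * B - 1‖ ‖T‖]

theorem HasDerivAt.isLittleO_sub_one_add_smul {𝔸 : Type*} [NormedRing 𝔸] [NormedAlgebra ℝ 𝔸]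
    {f : ℝ → 𝔸} {D : 𝔸} (hf : HasDerivAt f D 0) (hf0 : f 0 = 1) :
    (fun t => f t - (1 + t • D)) =o[𝓝 0] fun t => t := by
  simpa [hf0, sub_sub] using hasDerivAt_iff_isLittleO.mp hf

/-- `dist(Id + tA, SO(n)) = t·|(A + Aᵀ)/2| + o(t)` as `t → 0⁺`; i.e. the
Frobenius norm of the symmetric part of `A` is the first-order Taylor expansion of
`A ↦ dist(Id + A, SO(n))` at `A = 0`. -/
theorem stmt1 (n : ℕ) (A : Matrix (Fin n) (Fin n) ℝ) :
    (fun t : ℝ => distSO (1 + t • A) - t * frob (((1 : ℝ) / 2) • (A + Aᵀ)))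
      =o[𝓝[>] (0 : ℝ)] fun t => t := by
  set S : Matrix (Fin n) (Fin n) ℝ := (1 / 2 : ℝ) • (A + Aᵀ) with hS_def
  set W : Matrix (Fin n) (Fin n) ℝ := (1 / 2 : ℝ) • (A - Aᵀ) with hW_def
  have hS : Sᵀ = S := by
    rw [hS_def, transpose_smul, transpose_add, transpose_transpose, add_comm]
  have hW : Wᵀ = -W := by
    rw [hW_def, transpose_smul, transpose_sub, transpose_transpose, ← smul_neg, neg_sub]
  have hrot : (fun t : ℝ => exp (t • -W) * (1 + t • A) - (1 + t • S)) =o[𝓝 0] fun t => t := by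
    refine HasDerivAt.isLittleO_sub_one_add_smul ?_ (by simp)
    refine ((hasDerivAt_exp_smul_const (-W) 0).mul
      (((hasDerivAt_id 0).smul_const A).const_add 1)).congr_deriv ?_
    simp only [zero_smul, exp_zero, one_mul, add_zero, mul_one, one_smul, hS_def, hW_def]
    module
  have hpsd : (fun t : ℝ => exp (t • S) - (1 + t • S)) =o[𝓝 0] fun t => t :=
    ((hasDerivAt_exp_smul_const S 0).congr_deriv (by simp)).isLittleO_sub_one_add_smul (by simp)
  have hsqrt : ∀ t : ℝ, (exp ((t / 2) • S))ᵀ * exp ((t / 2) • S) = exp (t • S) := fun t => by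
    rw [← Matrix.exp_transpose, transpose_smul, hS,
      ← Matrix.exp_add_of_commute _ _ (Commute.refl _), ← add_smul, add_halves]
  have hbound : ∀ᶠ t in 𝓝[>] (0 : ℝ), ‖distSO (1 + t • A) - t * frob S‖ ≤
      ‖exp (t • -W) * (1 + t • A) - (1 + t • S)‖ + 2 * ‖exp (t • S) - (1 + t • S)‖ := by
    filter_upwards [self_mem_nhdsWithin] with t (ht : 0 < t)
    have hR : exp (t • -W) ∈ SOset n :=
      SOset.exp_mem_of_transpose_eq_neg (by rw [transpose_smul, transpose_neg, hW, smul_neg])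
    have := abs_distSO_sub_norm_le hR (1 + t • A) (exp ((t / 2) • S)) (t • S)
    rwa [hsqrt, norm_smul, Real.norm_of_nonneg ht.le, ← frob_eq_norm] at this
  refine (IsBigO.of_bound' ?_).trans_isLittleO
    ((hrot.norm_left.add (hpsd.norm_left.const_mul_left 2)).mono nhdsWithin_le_nhds)
  filter_upwards [hbound] with t ht
  exact ht.trans (Real.le_norm_self _)
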